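/- (Distortion mismatch for greedy quantization.) Assume ∫ ‖x‖^r dP(x) < +∞, let s ∈ (r, d+r), let (a_n)_{n≥1} be an L^r-optimal greedy quantization sequence for P, and let ε ∈ (0,1/3). If the probability measure ν together with the Borel function g_ε : ℝ^d → [0,∞) satisfies the ball control condition relative to a₁, then for every n ≥ 3: e_s(a^{(n)},P) ≤ 2^{1/d} · (r/d)^{r/(d(d+r))} · V_d^{−1/d} · φ_r(ε)^{−1/d} · (∫ g_ε^{−s/(d+r−s)} dP)^{(d+r−s)/(s(d+r))} · (∫ g_ε^{−r/d} dP)^{1/(d+r)} · (n−2)^{−1/d}. -/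

import Mathlib

/-!
Write `D_k = ∫ d(x, a^{(k)})^r dP` and `Θ_k = ∫ g(x) d(x, a^{(k)})^{d+r} dP`. Comparing the greedy
choice of `a_{k+1}` with a competitor `ξ` drawn from `ν`, and using the ball control in the ball
`B(x, ε d(x, a^{(k)}))`, gives the decrement `D_{k+1} + V_d φ_r(ε) Θ_k ≤ D_k`. Hölder's inequality
bounds `D_k ≤ Θ_k^{r/(d+r)} (∫ g^{-r/d} dP)^{d/(d+r)}`, so `D_{k+1} ≤ D_k - c D_k^{1+d/r}` and
`D_k = O(k^{-r/d})`. Summing the decrement over the second half of `1, …, n`, where `Θ` is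
nonincreasing, yields `Θ_n = O(n^{-(d+r)/d})`, and a second Hölder inequality turns this into the
bound on `e_s`.
-/

open MeasureTheory Metric
open scoped ENNReal NNReal

/-- The `L^s`-quantization error of a grid `Γ` with respect to the measure `P`:
`e_s(Γ,P) = (∫ d(x,Γ)^s dP(x))^(1/s)`. -/
noncomputable def qerr {E : Type*} [NormedAddCommGroup E] [MeasurableSpace E]
    (s : ℝ) (P : Measure E) (Γ : Set E) : ℝ :=
  (∫ x, infDist x Γ ^ s ∂P) ^ (1 / s)

/-- The first `n` points `a^{(n)} = {a 1, …, a n}` of a sequence `a`. -/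
def aSet {E : Type*} (a : ℕ → E) (n : ℕ) : Set E := a '' Set.Icc 1 n

def IsGreedy {E : Type*} [NormedAddCommGroup E] [MeasurableSpace E]
    (r : ℝ) (P : Measure E) (a : ℕ → E) : Prop :=
  ∀ (n : ℕ) (ξ : E), qerr r P (aSet a (n + 1)) ≤ qerr r P (insert ξ (aSet a n))

def msupport {E : Type*} [TopologicalSpace E] [MeasurableSpace E]
    (P : MeasureTheory.Measure E) : Set E :=
  {x | ∀ U ∈ nhds x, 0 < P U}

lemma Real.one_add_mul_le_one_sub_rpow_neg {x q : ℝ} (hx : x < 1) (hq : 0 ≤ q) :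
    1 + q * x ≤ (1 - x) ^ (-q) := by
  have hlog : Real.log (1 - x) ≤ -x := by
    linarith [Real.log_le_sub_one_of_pos (by linarith : 0 < 1 - x)]
  calc 1 + q * x ≤ Real.exp (q * x) := by linarith [Real.add_one_le_exp (q * x)]
    _ ≤ Real.exp (Real.log (1 - x) * -q) := Real.exp_le_exp.2 (by nlinarith)
    _ = (1 - x) ^ (-q) := (Real.rpow_def_of_pos (by linarith) _).symm

lemma Real.rpow_neg_add_le_rpow_neg {q C a b : ℝ} (hq : 0 < q) (hC : 0 ≤ C) (ha : 0 ≤ a)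
    (hb : 0 < b) (hba : b ≤ a - C * a ^ (1 + q)) : a ^ (-q) + q * C ≤ b ^ (-q) := by
  have ha' : 0 < a := by nlinarith [Real.rpow_nonneg ha (1 + q)]
  set x := C * a ^ q
  have hba' : b ≤ a * (1 - x) := by
    rw [Real.rpow_add ha', Real.rpow_one] at hba; linarith
  have hx₁ : x < 1 := by nlinarith
  have hcancel : a ^ (-q) * a ^ q = 1 := by rw [← Real.rpow_add ha']; simp
  calc a ^ (-q) + q * C = a ^ (-q) * (1 + q * x) := by linear_combination (-(q * C)) * hcancel
    _ ≤ a ^ (-q) * (1 - x) ^ (-q) := by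
      gcongr; exact Real.one_add_mul_le_one_sub_rpow_neg hx₁ hq.le
    _ = (a * (1 - x)) ^ (-q) := (Real.mul_rpow ha (by linarith)).symm
    _ ≤ b ^ (-q) := Real.rpow_le_rpow_of_nonpos hb hba' (by linarith)

lemma Real.mul_le_rpow_neg_of_le_sub_mul_rpow {q C : ℝ} {u : ℕ → ℝ} (hq : 0 < q) (hC : 0 ≤ C)
    (hu : ∀ k, 0 ≤ u k) (hrec : ∀ k, u (k + 1) ≤ u k - C * u k ^ (1 + q)) :
    ∀ m, 0 < u m → q * C * m ≤ u m ^ (-q) := by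
  intro m
  induction m with
  | zero => intro h; simpa using (Real.rpow_pos_of_pos h (-q)).le
  | succ m ih =>
    intro hpos
    have hle : u (m + 1) ≤ u m := by nlinarith [hrec m, Real.rpow_nonneg (hu m) (1 + q)]
    have := Real.rpow_neg_add_le_rpow_neg hq hC (hu m) hpos (hrec m)
    push_cast
    linarith [ih (hpos.trans_le hle)]

lemma Real.le_rpow_of_le_sub_mul_rpow {q C : ℝ} {u : ℕ → ℝ} (hq : 0 < q) (hC : 0 < C)
    (hu : ∀ k, 0 ≤ u k) (hrec : ∀ k, u (k + 1) ≤ u k - C * u k ^ (1 + q)) {m : ℕ} (hm : 1 ≤ m) :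
    u m ≤ (q * C * m) ^ (-q⁻¹) := by
  have hm' : (1 : ℝ) ≤ m := by exact_mod_cast hm
  rcases (hu m).eq_or_lt with h0 | hpos
  · rw [← h0]; positivity
  calc u m = (u m ^ (-q)) ^ (-q⁻¹) := by
        rw [← Real.rpow_mul (hu m), neg_mul_neg, mul_inv_cancel₀ hq.ne', Real.rpow_one]
    _ ≤ (q * C * m) ^ (-q⁻¹) :=
      Real.rpow_le_rpow_of_nonpos (by positivity)
        (Real.mul_le_rpow_neg_of_le_sub_mul_rpow hq hC.le hu hrec m hpos) (by simp [hq.le])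

lemma Real.add_mul_le_of_decrement {V : ℝ} {u t : ℕ → ℝ} (hV : 0 ≤ V)
    (hdec : ∀ k, u (k + 1) + V * t k ≤ u k) (ht : Antitone t) (m j : ℕ) : u (m + j) + j * (V * t (m + j)) ≤ u m := by
  induction j with
  | zero => simp
  | succ j ih =>
    have h1 := hdec (m + j)
    have h2 : V * t (m + j + 1) ≤ V * t (m + j) := by gcongr; exact ht (by omega)
    have h3 : (j : ℝ) * (V * t (m + j + 1)) ≤ j * (V * t (m + j)) := by gcongr
    rw [← add_assoc]
    push_cast
    linarith

lemma Real.le_of_decrement_of_le_mul_rpow {q C V : ℝ} {u t : ℕ → ℝ} (hq : 0 < q) (hC : 0 < C)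
    (hV : 0 < V) (hu : ∀ k, 0 ≤ u k) (hdec : ∀ k, u (k + 1) + V * t k ≤ u k)
    (hpow : ∀ k, C * u k ^ (1 + q) ≤ t k) (ht : Antitone t) {N : ℕ} (hN : 2 ≤ N) :
    t N ≤ (q * (V * C) * ((N - 1) / 2)) ^ (-q⁻¹) * (V * ((N - 1) / 2))⁻¹ := by
  set w : ℝ := (N - 1) / 2
  have hN' : (2 : ℝ) ≤ N := by exact_mod_cast hN
  have hw : 0 < w := by simp only [w]; linarith
  -- split `N = m + j` into two halves, each of length at least `(N - 1) / 2`
  set m := N / 2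
  set j := N - m
  have hm : w ≤ m := by
    have : (N : ℝ) ≤ 2 * m + 1 := by exact_mod_cast (by omega : N ≤ 2 * m + 1)
    simp only [w]; linarith
  have hj : w ≤ j := by
    have : (N : ℝ) ≤ 2 * j + 1 := by exact_mod_cast (by omega : N ≤ 2 * j + 1)
    simp only [w]; linarith
  have hrec : ∀ k, u (k + 1) ≤ u k - V * C * u k ^ (1 + q) := fun k => by
    nlinarith [hdec k, hpow k]
  have hum : u m ≤ (q * (V * C) * m) ^ (-q⁻¹) :=
    Real.le_rpow_of_le_sub_mul_rpow hq (by positivity) hu hrec (by omega)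
  have htel : j * (V * t N) ≤ u m := by
    have := Real.add_mul_le_of_decrement hV.le hdec ht m j
    rw [show m + j = N by omega] at this
    linarith [hu N]
  calc t N ≤ u m / (V * j) := by
        rw [le_div_iff₀ (by nlinarith)]; linarith
    _ ≤ (q * (V * C) * m) ^ (-q⁻¹) / (V * j) := by gcongr
    _ ≤ (q * (V * C) * w) ^ (-q⁻¹) / (V * w) := by
        refine div_le_div₀ (by positivity) ?_ (by positivity) (by gcongr)
        exact Real.rpow_le_rpow_of_nonpos (by positivity) (by gcongr) (by simp [hq.le])
    _ = _ := div_eq_mul_inv _ _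

lemma Real.rpow_le_of_decrement_of_le_rpow_mul_rpow {d r V I : ℝ} {u t : ℕ → ℝ} (hd : 0 < d)
    (hr : 0 < r) (hV : 0 < V) (hI : 0 < I) (hu : ∀ k, 0 ≤ u k) (ht₀ : ∀ k, 0 ≤ t k)
    (hdec : ∀ k, u (k + 1) + V * t k ≤ u k)
    (hhold : ∀ k, u k ≤ t k ^ (r / (d + r)) * I ^ (d / (d + r))) (ht : Antitone t)
    {N : ℕ} (hN : 2 ≤ N) :
    t N ^ (1 / (d + r)) ≤ 2 ^ (1 / d) * (r / d) ^ (r / (d * (d + r))) * V ^ (-(1 / d))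
      * I ^ (1 / (d + r)) * ((N : ℝ) - 1) ^ (-(1 / d)) := by
  have hpow : ∀ k, I ^ (-(d / r)) * u k ^ (1 + d / r) ≤ t k := fun k => calc
    I ^ (-(d / r)) * u k ^ (1 + d / r)
        ≤ I ^ (-(d / r)) * (t k ^ (r / (d + r)) * I ^ (d / (d + r))) ^ (1 + d / r) :=
      mul_le_mul_of_nonneg_left (Real.rpow_le_rpow (hu k) (hhold k) (by positivity))
        (by positivity)
    _ = t k := by
      rw [Real.mul_rpow (Real.rpow_nonneg (ht₀ k) _) (by positivity), ← Real.rpow_mul (ht₀ k),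
        ← Real.rpow_mul hI.le, mul_left_comm, ← Real.rpow_add hI,
        show r / (d + r) * (1 + d / r) = 1 by field_simp; ring,
        show -(d / r) + d / (d + r) * (1 + d / r) = 0 by field_simp; ring]
      simp
  have hbound :=
    Real.le_of_decrement_of_le_mul_rpow (by positivity) (by positivity) hV hu hdec hpow ht hN
  set w : ℝ := ((N : ℝ) - 1) / 2
  have hw : 0 < w := by
    have : (2 : ℝ) ≤ N := by exact_mod_cast hN
    simp only [w]; linarith
  rw [show (N : ℝ) - 1 = 2 * w by simp only [w]; ring]
  clear_value w
  calc t N ^ (1 / (d + r))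
      ≤ ((d / r * (V * I ^ (-(d / r))) * w) ^ (-(d / r)⁻¹) * (V * w)⁻¹) ^ (1 / (d + r)) :=
        Real.rpow_le_rpow (ht₀ N) hbound (by positivity)
    _ = _ := by
        refine Real.log_injOn_pos (Set.mem_Ioi.2 (by positivity))
          (Set.mem_Ioi.2 (by positivity)) ?_
        simp (disch := positivity) only [Real.log_mul, Real.log_rpow, Real.log_div, Real.log_inv]
        field_simp
        ring

lemma ENNReal.rpow_le_of_decrement_of_le_rpow_mul_rpow {D Θ : ℕ → ℝ≥0∞} {d r V : ℝ}
    {I : ℝ≥0∞} (hd : 0 < d) (hr : 0 < r) (hV : 0 < V) (hI₀ : I ≠ 0) (hI : I ≠ ⊤)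
    (hD : D 0 ≠ ⊤) (hdec : ∀ k, D (k + 1) + ENNReal.ofReal V * Θ k ≤ D k)
    (hhold : ∀ k, D k ≤ Θ k ^ (r / (d + r)) * I ^ (d / (d + r))) (hΘ : Antitone Θ)
    {N : ℕ} (hN : 2 ≤ N) :
    Θ N ^ (1 / (d + r)) ≤ ENNReal.ofReal (2 ^ (1 / d) * (r / d) ^ (r / (d * (d + r)))
      * V ^ (-(1 / d))) * I ^ (1 / (d + r)) * ENNReal.ofReal (((N : ℝ) - 1) ^ (-(1 / d))) := by
  have hDtop : ∀ k, D k ≠ ⊤ := fun k =>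
    ne_top_of_le_ne_top hD (antitone_nat_of_succ_le (fun k => le_self_add.trans (hdec k))
      (Nat.zero_le k))
  have hΘtop : ∀ k, Θ k ≠ ⊤ := fun k =>
    (ENNReal.lt_top_of_mul_ne_top_right (ne_top_of_le_ne_top (hDtop k) (le_add_self.trans (hdec k)))
      (by simpa using hV)).ne
  have key := Real.rpow_le_of_decrement_of_le_rpow_mul_rpow (u := fun k => (D k).toReal)
    (t := fun k => (Θ k).toReal) hd hr hV (ENNReal.toReal_pos hI₀ hI)
    (fun _ => ENNReal.toReal_nonneg) (fun _ => ENNReal.toReal_nonneg) (fun k => ?_) (fun k => ?_)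
    (fun k l hkl => ENNReal.toReal_mono (hΘtop k) (hΘ hkl)) hN
  · rw [← ENNReal.ofReal_toReal (hΘtop N), ENNReal.ofReal_rpow_of_nonneg ENNReal.toReal_nonneg
      (by positivity)]
    refine (ENNReal.ofReal_le_ofReal key).trans_eq ?_
    rw [ENNReal.ofReal_mul (by positivity), ENNReal.ofReal_mul (by positivity),
      ← ENNReal.ofReal_rpow_of_nonneg ENNReal.toReal_nonneg (by positivity),
      ENNReal.ofReal_toReal hI]
  · have := ENNReal.toReal_mono (hDtop k) (hdec k)
    rwa [ENNReal.toReal_add (hDtop _) (ENNReal.mul_ne_top ENNReal.ofReal_ne_top (hΘtop k)),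
      ENNReal.toReal_mul, ENNReal.toReal_ofReal hV.le] at this
  · have := ENNReal.toReal_mono (ENNReal.mul_ne_top (ENNReal.rpow_ne_top_of_nonneg
      (by positivity) (hΘtop k)) (ENNReal.rpow_ne_top_of_nonneg (by positivity) hI)) (hhold k)
    rwa [ENNReal.toReal_mul, ← ENNReal.toReal_rpow, ← ENNReal.toReal_rpow] at this

lemma ae_mem_msupport {E : Type*} [TopologicalSpace E] [MeasurableSpace E]
    [HereditarilyLindelofSpace E] (P : Measure E) : ∀ᵐ x ∂P, x ∈ msupport P := by
  filter_upwards [P.support_mem_ae] with x hx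
  exact (Measure.mem_support_iff_forall x).1 hx

lemma Metric.infDist_insert {E : Type*} [PseudoMetricSpace E] {Γ : Set E} (hΓ : Γ.Nonempty)
    (ξ y : E) : infDist y (insert ξ Γ) = min (dist y ξ) (infDist y Γ) := by
  rw [Set.insert_eq, infDist, infEDist_union, infEDist_singleton,
    ENNReal.toReal_min (edist_ne_top _ _) (infEDist_ne_top hΓ), dist_edist, infDist]

lemma ae_ne_zero_of_lintegral_rpow_ne_top {α : Type*} [MeasurableSpace α] {P : Measure α}
    {G : α → ℝ≥0∞} (hG : AEMeasurable G P) {c : ℝ} (hc : c < 0) (h : ∫⁻ x, G x ^ c ∂P ≠ ⊤) :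
    ∀ᵐ x ∂P, G x ≠ 0 := by
  filter_upwards [ae_lt_top' (hG.pow_const c) h] with x hx h0
  simp [h0, ENNReal.zero_rpow_of_neg hc] at hx

lemma lintegral_rpow_ne_zero {α : Type*} [MeasurableSpace α] {P : Measure α} [NeZero P]
    {G : α → ℝ≥0∞} (hG : AEMeasurable G P) (hGtop : ∀ x, G x ≠ ⊤) {c : ℝ} (hc : c < 0) :
    ∫⁻ x, G x ^ c ∂P ≠ 0 := by
  rw [Ne, lintegral_eq_zero_iff' (hG.pow_const c)]
  intro h
  obtain ⟨x, hx⟩ := h.exists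
  rcases ENNReal.rpow_eq_zero_iff.1 hx with ⟨-, hc'⟩ | ⟨hx', -⟩
  exacts [lt_asymm hc hc', hGtop x hx']

lemma lintegral_rpow_le_mul_weighted {α : Type*} [MeasurableSpace α] {P : Measure α}
    {G D : α → ℝ≥0∞} (hG : AEMeasurable G P) (hD : AEMeasurable D P) (hG0 : ∀ᵐ y ∂P, G y ≠ 0)
    (hGtop : ∀ y, G y ≠ ⊤) {b p : ℝ} (hb : 0 < b) (hbp : b < p) :
    ∫⁻ y, D y ^ b ∂P ≤ (∫⁻ y, G y * D y ^ p ∂P) ^ (b / p) *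
      (∫⁻ y, G y ^ (-(b / (p - b))) ∂P) ^ ((p - b) / p) := by
  have hp : 0 < p := hb.trans hbp
  have hpb : 0 < p - b := by linarith
  have hconj : (p / b).HolderConjugate (p / (p - b)) := by
    rw [Real.holderConjugate_iff]
    exact ⟨by rw [lt_div_iff₀ hb]; linarith, by field_simp; ring⟩
  have key := ENNReal.lintegral_mul_le_Lp_mul_Lq P hconj
    ((hG.pow_const (b / p)).mul (hD.pow_const b)) (hG.pow_const (-(b / p)))
  convert key using 1
  · refine lintegral_congr_ae ?_
    filter_upwards [hG0] with y hy
    simp only [Pi.mul_apply]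
    rw [mul_right_comm, ← ENNReal.rpow_add _ _ hy (hGtop y)]
    simp
  congr 1
  · rw [one_div_div]
    congr 1
    refine lintegral_congr fun y => ?_
    simp only [Pi.mul_apply]
    rw [ENNReal.mul_rpow_of_nonneg _ _ (by positivity), ← ENNReal.rpow_mul, ← ENNReal.rpow_mul,
      div_mul_div_cancel₀ hp.ne', div_self hb.ne', ENNReal.rpow_one, mul_div_cancel₀ _ hb.ne']
  · rw [one_div_div]
    congr 1
    refine lintegral_congr fun y => ?_
    rw [← ENNReal.rpow_mul]
    congr 1
    field_simp

/-- `∫ d(x,Γ)^r dP(x)`, taken in `ℝ≥0∞` so that it is meaningful without integrability. -/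
noncomputable def distortion {E : Type*} [PseudoMetricSpace E] [MeasurableSpace E]
    (r : ℝ) (P : Measure E) (Γ : Set E) : ℝ≥0∞ :=
  ∫⁻ y, ENNReal.ofReal (infDist y Γ) ^ r ∂P

section Distortion

variable {E : Type*} [MeasurableSpace E]

lemma lintegral_min_dist_rpow_add_le [PseudoMetricSpace E] [OpensMeasurableSpace E]
    (ν : Measure E) [IsProbabilityMeasure ν] (y : E) {δ ε φ r : ℝ} (hδ : 0 ≤ δ) (hε : 0 ≤ ε)
    (hφ : 0 ≤ φ) (hr : 0 < r) (hφε : φ + ε ^ r ≤ 1) :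
    ∫⁻ ξ, ENNReal.ofReal (min (dist y ξ) δ) ^ r ∂ν
      + ENNReal.ofReal (φ * δ ^ r) * ν (closedBall y (ε * δ)) ≤ ENNReal.ofReal δ ^ r := by
  have hpt : ∀ ξ, ENNReal.ofReal (min (dist y ξ) δ) ^ r
      + (closedBall y (ε * δ)).indicator (fun _ => ENNReal.ofReal (φ * δ ^ r)) ξ
      ≤ ENNReal.ofReal δ ^ r := fun ξ => by
    have hmin : 0 ≤ min (dist y ξ) δ := le_min dist_nonneg hδ
    rw [ENNReal.ofReal_rpow_of_nonneg hmin hr.le, ENNReal.ofReal_rpow_of_nonneg hδ hr.le]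
    by_cases hξ : ξ ∈ closedBall y (ε * δ)
    · rw [Set.indicator_of_mem hξ, ← ENNReal.ofReal_add (by positivity) (by positivity)]
      refine ENNReal.ofReal_le_ofReal ?_
      have : min (dist y ξ) δ ^ r ≤ (ε * δ) ^ r :=
        Real.rpow_le_rpow hmin ((min_le_left _ _).trans (dist_comm y ξ ▸ hξ)) hr.le
      rw [Real.mul_rpow hε hδ] at this
      nlinarith [Real.rpow_nonneg hδ r]
    · rw [Set.indicator_of_notMem hξ, add_zero]
      exact ENNReal.ofReal_le_ofReal (Real.rpow_le_rpow hmin (min_le_right _ _) hr.le)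
  have := lintegral_mono hpt (μ := ν)
  rwa [lintegral_add_right _ (measurable_const.indicator measurableSet_closedBall),
    lintegral_indicator_const measurableSet_closedBall, lintegral_const, measure_univ,
    mul_one] at this

/-- Averaging the greedy inequality over a new point `ξ ∼ ν`: points `ξ` close to `y` reduce
`d(y,Γ)^r` by a definite fraction. -/
lemma distortion_add_lintegral_le [PseudoMetricSpace E] [SecondCountableTopology E]
    [OpensMeasurableSpace E] {P ν : Measure E} [SFinite P] [IsProbabilityMeasure ν]
    {r ε φ : ℝ} (hr : 0 < r) (hε : 0 ≤ ε) (hφ : 0 ≤ φ) (hφε : φ + ε ^ r ≤ 1)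
    {Γ Γ' : Set E} (hΓ : Γ.Nonempty) (hΓ' : ∀ ξ, distortion r P Γ' ≤ distortion r P (insert ξ Γ)) :
    distortion r P Γ'
      + ∫⁻ y, ENNReal.ofReal (φ * infDist y Γ ^ r) * ν (closedBall y (ε * infDist y Γ)) ∂P
      ≤ distortion r P Γ := by
  have hmeas :
      Measurable (Function.uncurry fun ξ y => ENNReal.ofReal (infDist y (insert ξ Γ)) ^ r) := by
    simp only [Function.uncurry_def, infDist_insert hΓ]
    exact (((continuous_snd.dist continuous_fst).min
      ((continuous_infDist_pt Γ).comp continuous_snd)).measurable.ennreal_ofReal).pow_const r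
  calc _ ≤ ∫⁻ y, ∫⁻ ξ, ENNReal.ofReal (infDist y (insert ξ Γ)) ^ r ∂ν ∂P
        + ∫⁻ y, ENNReal.ofReal (φ * infDist y Γ ^ r) * ν (closedBall y (ε * infDist y Γ)) ∂P := by
        gcongr
        calc distortion r P Γ' = ∫⁻ _, distortion r P Γ' ∂ν := by simp
          _ ≤ ∫⁻ ξ, distortion r P (insert ξ Γ) ∂ν := lintegral_mono hΓ'
          _ = _ := lintegral_lintegral_swap hmeas.aemeasurable
    _ ≤ _ := le_lintegral_add _ _
    _ ≤ distortion r P Γ := lintegral_mono fun y => by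
        simpa only [infDist_insert hΓ] using
          lintegral_min_dist_rpow_add_le ν y infDist_nonneg hε hφ hr hφε

lemma distortion_lt_top [NormedAddCommGroup E] {P : Measure E} [IsFiniteMeasure P] {r : ℝ}
    (hr : 0 ≤ r) (hmom : ∫⁻ x, (‖x‖₊ : ℝ≥0∞) ^ r ∂P < ⊤)
    {Γ : Set E} {c : E} (hc : c ∈ Γ) : distortion r P Γ < ⊤ := by
  have hpt : ∀ y, ENNReal.ofReal (infDist y Γ) ^ r
      ≤ 2 ^ r * ((‖y‖₊ : ℝ≥0∞) ^ r + (‖c‖₊ : ℝ≥0∞) ^ r) := fun y => by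
    refine le_trans ?_ (ENNReal.add_rpow_le_two_rpow_mul_rpow_add_rpow _ _ hr)
    gcongr
    rw [← enorm_eq_nnnorm, ← enorm_eq_nnnorm, ← ofReal_norm, ← ofReal_norm,
      ← ENNReal.ofReal_add (norm_nonneg _) (norm_nonneg _)]
    exact ENNReal.ofReal_le_ofReal
      ((infDist_le_dist_of_mem hc).trans (dist_le_norm_add_norm y c))
  calc distortion r P Γ ≤ ∫⁻ y, 2 ^ r * ((‖y‖₊ : ℝ≥0∞) ^ r + (‖c‖₊ : ℝ≥0∞) ^ r) ∂P :=
        lintegral_mono hpt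
    _ = 2 ^ r * (∫⁻ y, (‖y‖₊ : ℝ≥0∞) ^ r ∂P + (‖c‖₊ : ℝ≥0∞) ^ r * P Set.univ) := by
        rw [lintegral_const_mul' _ _ (by simp), lintegral_add_right _ measurable_const,
          lintegral_const]
    _ < ⊤ := by
        refine ENNReal.mul_lt_top (ENNReal.rpow_lt_top_of_nonneg hr (by simp))
          (ENNReal.add_lt_top.2 ⟨hmom, ?_⟩)
        exact ENNReal.mul_lt_top (ENNReal.rpow_lt_top_of_nonneg hr ENNReal.coe_ne_top)
          (measure_lt_top _ _)

variable [NormedAddCommGroup E] [OpensMeasurableSpace E] {P : Measure E} {r : ℝ}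

lemma qerr_eq_toReal_distortion (hr : 0 ≤ r) (Γ : Set E) :
    qerr r P Γ = (distortion r P Γ).toReal ^ (1 / r) := by
  rw [qerr, distortion,
    integral_eq_lintegral_of_nonneg_ae (ae_of_all _ fun _ => Real.rpow_nonneg infDist_nonneg r)
    ((continuous_infDist_pt Γ).rpow_const fun _ => Or.inr hr).aestronglyMeasurable]
  congr 2
  exact lintegral_congr fun y => (ENNReal.ofReal_rpow_of_nonneg infDist_nonneg hr).symm

lemma ofReal_qerr_le (hr : 0 < r) (Γ : Set E) :
    ENNReal.ofReal (qerr r P Γ) ≤ distortion r P Γ ^ (1 / r) := by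
  rw [qerr_eq_toReal_distortion hr.le,
    ← ENNReal.ofReal_rpow_of_nonneg ENNReal.toReal_nonneg (by positivity)]
  exact ENNReal.rpow_le_rpow ENNReal.ofReal_toReal_le (by positivity)

lemma distortion_le_of_qerr_le (hr : 0 < r) {Γ Γ' : Set E} (hΓ : distortion r P Γ ≠ ⊤)
    (hΓ' : distortion r P Γ' ≠ ⊤) (h : qerr r P Γ ≤ qerr r P Γ') :
    distortion r P Γ ≤ distortion r P Γ' := by
  rwa [qerr_eq_toReal_distortion hr.le, qerr_eq_toReal_distortion hr.le,
    Real.rpow_le_rpow_iff ENNReal.toReal_nonneg ENNReal.toReal_nonneg (by positivity),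
    ENNReal.toReal_le_toReal hΓ hΓ'] at h

end Distortion

lemma aSet_mono {E : Type*} (a : ℕ → E) : Monotone (aSet a) :=
  fun _ _ h => Set.image_mono (Set.Icc_subset_Icc_right h)

lemma mem_aSet {E : Type*} (a : ℕ → E) {n : ℕ} (hn : 1 ≤ n) : a 1 ∈ aSet a n :=
  ⟨1, ⟨le_rfl, hn⟩, rfl⟩

lemma distortion_succ_add_le_of_isGreedy {E : Type*} [NormedAddCommGroup E]
    [SecondCountableTopology E] [MeasurableSpace E] [OpensMeasurableSpace E] {P ν : Measure E}
    [IsProbabilityMeasure P] [IsProbabilityMeasure ν] {r : ℝ} (hr : 0 < r)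
    (hmom : ∫⁻ x, (‖x‖₊ : ℝ≥0∞) ^ r ∂P < ⊤) {a : ℕ → E} (ha : IsGreedy r P a) {d : ℕ}
    {ε φ V : ℝ} (hε : 0 ≤ ε) (hφ : 0 ≤ φ) (hφε : φ + ε ^ r ≤ 1) (hV : 0 ≤ V) {g : E → ℝ}
    (hctrl : ∀ x ∈ msupport P, ∀ t ∈ Set.Icc (0 : ℝ) (ε * ‖x - a 1‖),
      ENNReal.ofReal (g x * V * t ^ d) ≤ ν (closedBall x t))
    {k : ℕ} (hk : 1 ≤ k) :
    distortion r P (aSet a (k + 1)) + ENNReal.ofReal (V * (φ * ε ^ d))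
      * ∫⁻ y, ENNReal.ofReal (g y) * ENNReal.ofReal (infDist y (aSet a k)) ^ ((d : ℝ) + r) ∂P
      ≤ distortion r P (aSet a k) := by
  have hfin : ∀ {Γ : Set E}, a 1 ∈ Γ → distortion r P Γ ≠ ⊤ := fun h =>
    (distortion_lt_top hr.le hmom h).ne
  refine le_trans (add_le_add le_rfl ?_) (distortion_add_lintegral_le (ν := ν) hr hε hφ hφε
    ⟨a 1, mem_aSet a hk⟩ fun ξ => distortion_le_of_qerr_le hr (hfin (mem_aSet a (by omega)))
      (hfin (Set.mem_insert_of_mem ξ (mem_aSet a hk))) (ha k ξ))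
  rw [← lintegral_const_mul' _ _ ENNReal.ofReal_ne_top]
  refine lintegral_mono_ae ?_
  filter_upwards [ae_mem_msupport P] with y hy
  set δ := infDist y (aSet a k)
  have hδ : 0 ≤ δ := infDist_nonneg
  have hδa : δ ≤ ‖y - a 1‖ := dist_eq_norm y (a 1) ▸ infDist_le_dist_of_mem (mem_aSet a hk)
  calc ENNReal.ofReal (V * (φ * ε ^ d)) * (ENNReal.ofReal (g y) * ENNReal.ofReal δ ^ ((d : ℝ) + r))
      = ENNReal.ofReal (φ * δ ^ r) * ENNReal.ofReal (g y * V * (ε * δ) ^ d) := by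
        rw [ENNReal.ofReal_rpow_of_nonneg hδ (by positivity), mul_comm (ENNReal.ofReal (g y)),
          ← ENNReal.ofReal_mul (by positivity), ← ENNReal.ofReal_mul (by positivity),
          ← ENNReal.ofReal_mul (by positivity), Real.rpow_add' hδ (by positivity),
          Real.rpow_natCast]
        ring_nf
    _ ≤ ENNReal.ofReal (φ * δ ^ r) * ν (closedBall y (ε * δ)) := by
        gcongr
        exact hctrl y hy _ ⟨by positivity, by gcongr⟩

lemma distortion_le_lintegral_mul_rpow {E : Type*} [NormedAddCommGroup E] [MeasurableSpace E]
    [OpensMeasurableSpace E] {P : Measure E} {G : E → ℝ≥0∞} (hG : AEMeasurable G P)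
    (hG₀ : ∀ᵐ y ∂P, G y ≠ 0) (hGtop : ∀ y, G y ≠ ⊤) {s p : ℝ} (hs : 0 < s) (hsp : s < p)
    (Γ : Set E) :
    distortion s P Γ ≤ (∫⁻ y, G y * ENNReal.ofReal (infDist y Γ) ^ p ∂P) ^ (s / p)
      * (∫⁻ y, G y ^ (-(s / (p - s))) ∂P) ^ ((p - s) / p) :=
  lintegral_rpow_le_mul_weighted hG
    (continuous_infDist_pt Γ).measurable.ennreal_ofReal.aemeasurable hG₀ hGtop hs hsp

lemma ofReal_qerr_le_lintegral_mul_rpow {E : Type*} [NormedAddCommGroup E] [MeasurableSpace E]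
    [OpensMeasurableSpace E] {P : Measure E} {G : E → ℝ≥0∞} (hG : AEMeasurable G P)
    (hG₀ : ∀ᵐ y ∂P, G y ≠ 0) (hGtop : ∀ y, G y ≠ ⊤) {s p : ℝ} (hs : 0 < s) (hsp : s < p)
    (Γ : Set E) :
    ENNReal.ofReal (qerr s P Γ) ≤ (∫⁻ y, G y * ENNReal.ofReal (infDist y Γ) ^ p ∂P) ^ (1 / p)
      * (∫⁻ y, G y ^ (-(s / (p - s))) ∂P) ^ ((p - s) / (s * p)) := by
  have hp : 0 < p := hs.trans hsp
  calc ENNReal.ofReal (qerr s P Γ) ≤ distortion s P Γ ^ (1 / s) := ofReal_qerr_le hs Γ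
    _ ≤ ((∫⁻ y, G y * ENNReal.ofReal (infDist y Γ) ^ p ∂P) ^ (s / p)
          * (∫⁻ y, G y ^ (-(s / (p - s))) ∂P) ^ ((p - s) / p)) ^ (1 / s) :=
        ENNReal.rpow_le_rpow (distortion_le_lintegral_mul_rpow hG hG₀ hGtop hs hsp Γ)
          (by positivity)
    _ = _ := by
        rw [ENNReal.mul_rpow_of_nonneg _ _ (by positivity), ← ENNReal.rpow_mul, ← ENNReal.rpow_mul]
        congr 2 <;> field_simp

lemma lintegral_mul_infDist_rpow_le_of_isGreedy {E : Type*} [NormedAddCommGroup E]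
    [SecondCountableTopology E] [MeasurableSpace E] [OpensMeasurableSpace E] {P ν : Measure E}
    [IsProbabilityMeasure P] [IsProbabilityMeasure ν] {r : ℝ} (hr : 0 < r)
    (hmom : ∫⁻ x, (‖x‖₊ : ℝ≥0∞) ^ r ∂P < ⊤) {a : ℕ → E} (ha : IsGreedy r P a) {d : ℕ}
    (hd : 0 < d) {ε φ V : ℝ} (hε : 0 < ε) (hφ : 0 < φ) (hφε : φ + ε ^ r ≤ 1) (hV : 0 < V)
    {g : E → ℝ} (hgm : Measurable g)
    (hctrl : ∀ x ∈ msupport P, ∀ t ∈ Set.Icc (0 : ℝ) (ε * ‖x - a 1‖),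
      ENNReal.ofReal (g x * V * t ^ d) ≤ ν (closedBall x t))
    (hI : ∫⁻ x, ENNReal.ofReal (g x) ^ (-(r / (d : ℝ))) ∂P ≠ ⊤) {n : ℕ} (hn : 3 ≤ n) :
    (∫⁻ y, ENNReal.ofReal (g y) * ENNReal.ofReal (infDist y (aSet a n)) ^ ((d : ℝ) + r) ∂P)
        ^ (1 / ((d : ℝ) + r))
      ≤ ENNReal.ofReal (2 ^ (1 / (d : ℝ)) * (r / d) ^ (r / (d * ((d : ℝ) + r)))
          * (V * (φ * ε ^ d)) ^ (-(1 / (d : ℝ))))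
        * (∫⁻ x, ENNReal.ofReal (g x) ^ (-(r / (d : ℝ))) ∂P) ^ (1 / ((d : ℝ) + r))
        * ENNReal.ofReal (((n : ℝ) - 2) ^ (-(1 / (d : ℝ)))) := by
  have hd₀ : (0 : ℝ) < d := by exact_mod_cast hd
  have hG : AEMeasurable (fun x => ENNReal.ofReal (g x)) P := hgm.ennreal_ofReal.aemeasurable
  have hGtop : ∀ x, ENNReal.ofReal (g x) ≠ ⊤ := fun _ => ENNReal.ofReal_ne_top
  have hneg : -(r / (d : ℝ)) < 0 := by simp only [Left.neg_neg_iff]; positivity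
  have hΘ := ENNReal.rpow_le_of_decrement_of_le_rpow_mul_rpow
    (D := fun k => distortion r P (aSet a (k + 1)))
    (Θ := fun k => ∫⁻ y, ENNReal.ofReal (g y)
      * ENNReal.ofReal (infDist y (aSet a (k + 1))) ^ ((d : ℝ) + r) ∂P)
    hd₀ hr (by positivity) (lintegral_rpow_ne_zero hG hGtop hneg) hI
    (distortion_lt_top hr.le hmom (mem_aSet a le_rfl)).ne
    (fun k => distortion_succ_add_le_of_isGreedy hr hmom ha hε.le hφ.le hφε hV.le hctrl
      (by omega))
    (fun k => by
      have := distortion_le_lintegral_mul_rpow hG (ae_ne_zero_of_lintegral_rpow_ne_top hG hneg hI)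
        hGtop hr (lt_add_of_pos_left r hd₀) (aSet a (k + 1))
      rwa [add_sub_cancel_right] at this)
    (fun k l hkl => lintegral_mono fun y => by
      gcongr
      exact infDist_le_infDist_of_subset (aSet_mono a (by omega)) ⟨_, mem_aSet a (by omega)⟩)
    (N := n - 1) (by omega)
  rwa [Nat.sub_add_cancel (by omega), Nat.cast_sub (by omega), Nat.cast_one, sub_sub,
    one_add_one_eq_two] at hΘ

theorem stmt_10_general {E : Type*} [NormedAddCommGroup E] [NormedSpace ℝ E]
    [FiniteDimensional ℝ E] [MeasurableSpace E] [BorelSpace E]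
    (d : ℕ) (hd : 1 ≤ d)
    (μ : Measure E) [μ.IsAddHaarMeasure]
    (r : ℝ) (hr : 0 < r)
    (s : ℝ) (hs : s ∈ Set.Ioo r ((d : ℝ) + r))
    (P : Measure E) [IsProbabilityMeasure P]
    (hmom : (∫⁻ x, (‖x‖₊ : ℝ≥0∞) ^ r ∂P) < ⊤)
    (a : ℕ → E) (ha : IsGreedy r P a)
    (ε : ℝ) (hε : ε ∈ Set.Ioo (0 : ℝ) (1 / 3))
    (ν : Measure E) [IsProbabilityMeasure ν]
    (g : E → ℝ) (hgm : Measurable g)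
    (hctrl : ∀ x ∈ msupport P, ∀ t ∈ Set.Icc (0 : ℝ) (ε * ‖x - a 1‖),
      ENNReal.ofReal (g x * (μ (closedBall 0 1)).toReal * t ^ d) ≤ ν (closedBall x t))
    (n : ℕ) (hn : 3 ≤ n) :
    ENNReal.ofReal (qerr s P (aSet a n)) ≤
      ENNReal.ofReal ((2 : ℝ) ^ (1 / (d : ℝ))
          * (r / (d : ℝ)) ^ (r / ((d : ℝ) * ((d : ℝ) + r)))
          * (μ (closedBall 0 1)).toReal ^ (-(1 / (d : ℝ)))
          * (((3 : ℝ) ^ (-r) - ε ^ r) * ε ^ d) ^ (-(1 / (d : ℝ))))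
        * (∫⁻ x, ENNReal.ofReal (g x) ^ (-(s / ((d : ℝ) + r - s))) ∂P)
            ^ (((d : ℝ) + r - s) / (s * ((d : ℝ) + r)))
        * (∫⁻ x, ENNReal.ofReal (g x) ^ (-(r / (d : ℝ))) ∂P) ^ (1 / ((d : ℝ) + r))
        * ENNReal.ofReal (((n : ℝ) - 2) ^ (-(1 / (d : ℝ)))) := by
  obtain ⟨hrs, hsd⟩ := hs
  obtain ⟨hε₀, hε₃⟩ := hε
  have hs₀ : 0 < s := hr.trans hrs
  have hVd : 0 < (μ (closedBall 0 1)).toReal :=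
    ENNReal.toReal_pos (measure_closedBall_pos μ 0 one_pos).ne' measure_closedBall_lt_top.ne
  have hφε : (3 : ℝ) ^ (-r) - ε ^ r + ε ^ r ≤ 1 := by
    rw [sub_add_cancel]; exact Real.rpow_le_one_of_one_le_of_nonpos (by norm_num) (by linarith)
  have hφ : 0 < (3 : ℝ) ^ (-r) - ε ^ r := by
    have := Real.rpow_lt_rpow hε₀.le hε₃ hr
    rwa [one_div, Real.inv_rpow (by norm_num), ← Real.rpow_neg (by norm_num), ← sub_pos] at this
  have hG : AEMeasurable (fun x => ENNReal.ofReal (g x)) P := hgm.ennreal_ofReal.aemeasurable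
  rcases eq_or_ne (∫⁻ x, ENNReal.ofReal (g x) ^ (-(r / (d : ℝ))) ∂P) ⊤ with hI | hI
  · have hd₀ : (0 : ℝ) < d := by exact_mod_cast hd
    have hn₂ : (0 : ℝ) < n - 2 := by linarith [show (3 : ℝ) ≤ n by exact_mod_cast hn]
    have hI₁ := lintegral_rpow_ne_zero hG (fun _ => ENNReal.ofReal_ne_top)
      (neg_neg_of_pos (div_pos hs₀ (by linarith : 0 < (d : ℝ) + r - s)))
    rw [hI, ENNReal.top_rpow_of_pos (by positivity), ENNReal.mul_top, ENNReal.top_mul]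
    · exact le_top
    · exact (ENNReal.ofReal_pos.2 (Real.rpow_pos_of_pos hn₂ _)).ne'
    · exact mul_ne_zero (ENNReal.ofReal_pos.2 (by positivity)).ne'
        ((ENNReal.rpow_eq_zero_iff_of_pos (div_pos (by linarith) (by positivity))).not.2 hI₁)
  calc ENNReal.ofReal (qerr s P (aSet a n))
      ≤ (∫⁻ y, ENNReal.ofReal (g y) * ENNReal.ofReal (infDist y (aSet a n)) ^ ((d : ℝ) + r) ∂P)
          ^ (1 / ((d : ℝ) + r))
        * (∫⁻ x, ENNReal.ofReal (g x) ^ (-(s / ((d : ℝ) + r - s))) ∂P)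
          ^ (((d : ℝ) + r - s) / (s * ((d : ℝ) + r))) :=
      ofReal_qerr_le_lintegral_mul_rpow hG
        (ae_ne_zero_of_lintegral_rpow_ne_top hG (by simp; positivity) hI)
        (fun _ => ENNReal.ofReal_ne_top) hs₀ hsd _
    _ ≤ _ := by
      refine (mul_le_mul_left (lintegral_mul_infDist_rpow_le_of_isGreedy hr hmom ha hd hε₀ hφ
        hφε hVd hgm hctrl hI hn) _).trans_eq ?_
      rw [Real.mul_rpow hVd.le (by positivity), ← mul_assoc]
      ring

/-- Distortion mismatch for greedy quantization (Theorem 3.1): under the ball control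
condition `ν(B(x,t)) ≥ g(x)·V_d·t^d` (for `x ∈ supp P`, `0 ≤ t ≤ ε‖x−a₁‖`), for
`s ∈ (r, d+r)` and `n ≥ 3`,
`e_s(a^{(n)},P) ≤ 2^{1/d} (r/d)^{r/(d(d+r))} V_d^{−1/d} φ_r(ε)^{−1/d}
  (∫ g^{−s/(d+r−s)} dP)^{(d+r−s)/(s(d+r))} (∫ g^{−r/d} dP)^{1/(d+r)} (n−2)^{−1/d}`,
the `g`-integrals being taken in `[0,∞]`, `φ_r(u) = (3^{−r} − u^r) u^d`, `V_d = μ(B(0,1))`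
for a Haar (Lebesgue) measure `μ`. -/
theorem stmt_10 {E : Type*} [NormedAddCommGroup E] [NormedSpace ℝ E]
    [FiniteDimensional ℝ E] [MeasurableSpace E] [BorelSpace E]
    (d : ℕ) (hd : 1 ≤ d) (hdim : Module.finrank ℝ E = d)
    (μ : Measure E) [μ.IsAddHaarMeasure]
    (r : ℝ) (hr : 0 < r)
    (s : ℝ) (hs : s ∈ Set.Ioo r ((d : ℝ) + r))
    (P : Measure E) [IsProbabilityMeasure P]
    (hmom : (∫⁻ x, (‖x‖₊ : ℝ≥0∞) ^ r ∂P) < ⊤)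
    (a : ℕ → E) (ha : IsGreedy r P a)
    (ε : ℝ) (hε : ε ∈ Set.Ioo (0 : ℝ) (1 / 3))
    (ν : Measure E) [IsProbabilityMeasure ν]
    (g : E → ℝ) (hgm : Measurable g) (hg0 : ∀ x, 0 ≤ g x)
    (hctrl : ∀ x ∈ msupport P, ∀ t ∈ Set.Icc (0 : ℝ) (ε * ‖x - a 1‖),
      ENNReal.ofReal (g x * (μ (closedBall 0 1)).toReal * t ^ d) ≤ ν (closedBall x t))
    (n : ℕ) (hn : 3 ≤ n) :
    ENNReal.ofReal (qerr s P (aSet a n)) ≤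
      ENNReal.ofReal ((2 : ℝ) ^ (1 / (d : ℝ))
          * (r / (d : ℝ)) ^ (r / ((d : ℝ) * ((d : ℝ) + r)))
          * (μ (closedBall 0 1)).toReal ^ (-(1 / (d : ℝ)))
          * (((3 : ℝ) ^ (-r) - ε ^ r) * ε ^ d) ^ (-(1 / (d : ℝ))))
        * (∫⁻ x, ENNReal.ofReal (g x) ^ (-(s / ((d : ℝ) + r - s))) ∂P)
            ^ (((d : ℝ) + r - s) / (s * ((d : ℝ) + r)))
        * (∫⁻ x, ENNReal.ofReal (g x) ^ (-(r / (d : ℝ))) ∂P) ^ (1 / ((d : ℝ) + r))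
        * ENNReal.ofReal (((n : ℝ) - 2) ^ (-(1 / (d : ℝ)))) :=
  stmt_10_general d hd μ r hr s hs P hmom a ha ε hε ν g hgm hctrl n hn
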